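/- arXiv:2101.00602 — 2 statements merged into one kernel-verified Lean document; each statement's English description precedes it below -/
import Mathlib

section
/- With c(q, m, n) = ((n + 1 − m(q−1))²/((n+1) q^(m+2))) · C(n+m, m) · ((q−1)/q)ⁿ, for any q > 1 and m ≥ 1 the total probability conservation holds: m·|r|²·e^(−2ms) + Σ_{n=0}^∞ c(q,m,n) = 1, where |r|² = (q−1)/q and e^(−2s) = 1/q, i.e., (m(q−1)/q^(m+1)) + Σ_{n=0}^∞ c(q,m,n) = 1. -/
/-- The output-spectrum coefficients of the two-mode squeezer channel. -/
noncomputable def squeezerCoeff (q : ℝ) (m n : ℕ) : ℝ :=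
  (((n : ℝ) + 1 - m * (q - 1))^2 / (((n : ℝ) + 1) * q^(m + 2))) *
    (Nat.choose (n + m) m) * ((q - 1) / q)^n

/-- Trace preservation: m(q−1)/q^(m+1) + Σ_{n=0}^∞ c(q,m,n) = 1. -/
theorem squeezerCoeff_sums_to_one (q : ℝ) (hq : 1 < q) (m : ℕ) (hm : 1 ≤ m) :
    (m : ℝ) * (q - 1) / q^(m + 1) + ∑' n : ℕ, squeezerCoeff q m n = 1 := by
  obtain ⟨K, rfl⟩ : ∃ K, m = K + 1 := ⟨m - 1, by omega⟩
  have hq0 : (0:ℝ) < q := lt_trans one_pos hq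
  have hqne : q ≠ 0 := ne_of_gt hq0
  set x : ℝ := (q - 1) / q with hxdef
  have hx0 : 0 < x := div_pos (by linarith) hq0
  have hx1 : x < 1 := (div_lt_one hq0).2 (by linarith)
  have hxn : ‖x‖ < 1 := by rw [Real.norm_eq_abs, abs_lt]; constructor <;> linarith
  clear_value x
  have h1mx : (1:ℝ) - x = 1 / q := by rw [hxdef]; field_simp; ring
  -- three basic hasSum facts
  have h1 : HasSum (fun n : ℕ => ((n + (K+1)).choose (K+1) : ℝ) * x ^ n)
      (1 / (1 - x) ^ (K + 2)) :=
    hasSum_choose_mul_geometric_of_norm_lt_one (K+1) hxn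
  have h2 : HasSum (fun n : ℕ => ((n + (K+2)).choose (K+2) : ℝ) * x ^ n)
      (1 / (1 - x) ^ (K + 3)) :=
    hasSum_choose_mul_geometric_of_norm_lt_one (K+2) hxn
  have h3base : HasSum (fun n : ℕ => ((n + K).choose K : ℝ) * x ^ n)
      (1 / (1 - x) ^ (K + 1)) :=
    hasSum_choose_mul_geometric_of_norm_lt_one K hxn
  have h3 : HasSum (fun n : ℕ => ((n + 1 + K).choose K : ℝ) * x ^ (n + 1))
      (1 / (1 - x) ^ (K + 1) - 1) := by
    have := (hasSum_nat_add_iff' (f := fun n : ℕ => ((n + K).choose K : ℝ) * x ^ n) 1).2 h3base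
    simpa using this
  -- coefficients
  set a : ℝ := ((K:ℝ) + 2) / q ^ (K + 3) with hadef
  set b : ℝ := ((K:ℝ) + 1) * (2 * q - 1) / q ^ (K + 3) with hbdef
  set c : ℝ := ((K:ℝ) + 1) * (q - 1) / q ^ (K + 2) with hcdef
  have hcomb : HasSum (fun n : ℕ =>
      a * (((n + (K+2)).choose (K+2) : ℝ) * x ^ n)
      - b * (((n + (K+1)).choose (K+1) : ℝ) * x ^ n)
      + c * (((n + 1 + K).choose K : ℝ) * x ^ (n + 1)))
      (a * (1 / (1 - x) ^ (K + 3)) - b * (1 / (1 - x) ^ (K + 2))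
        + c * (1 / (1 - x) ^ (K + 1) - 1)) :=
    ((h2.mul_left a).sub (h1.mul_left b)).add (h3.mul_left c)
  -- pointwise identity
  have hpt : ∀ n : ℕ,
      a * (((n + (K+2)).choose (K+2) : ℝ) * x ^ n)
      - b * (((n + (K+1)).choose (K+1) : ℝ) * x ^ n)
      + c * (((n + 1 + K).choose K : ℝ) * x ^ (n + 1))
      = squeezerCoeff q (K+1) n := by
    intro n
    have hn1 : ((n:ℝ) + 1) ≠ 0 := by positivity
    -- binomial identities
    have e1 : ((K:ℝ) + 2) * ((n + (K+2)).choose (K+2) : ℝ)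
        = ((n:ℝ) + K + 2) * ((n + (K+1)).choose (K+1) : ℝ) := by
      have := Nat.add_one_mul_choose_eq (n + (K+1)) (K+1)
      have h' : (n + (K + 1) + 1) * (n + (K + 1)).choose (K + 1)
          = (n + (K + 2)).choose (K + 2) * (K + 2) := by
        simpa [Nat.succ_eq_add_one, show n + (K+1) + 1 = n + (K+2) by omega] using this
      have := congrArg (fun t : ℕ => (t : ℝ)) h'
      push_cast at this
      linarith [this]
    have e2 : ((n:ℝ) + 1) * ((n + 1 + K).choose K : ℝ)
        = ((K:ℝ) + 1) * ((n + (K+1)).choose (K+1) : ℝ) := by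
      have h' := Nat.choose_succ_right_eq (n + K + 1) K
      -- (n+K+1).choose (K+1) * (K+1) = (n+K+1).choose K * (n+K+1 - K)
      have h'' : (n + (K+1)).choose (K + 1) * (K + 1)
          = (n + 1 + K).choose K * (n + 1) := by
        rw [show n + (K+1) = n + K + 1 by omega, show n + 1 + K = n + K + 1 by omega]
        simpa [show n + K + 1 - K = n + 1 by omega] using h'
      have := congrArg (fun t : ℕ => (t : ℝ)) h''
      push_cast at this
      linarith [this]
    -- solve for the two "other" binomials
    have e1' : ((n + (K+2)).choose (K+2) : ℝ)
        = ((n:ℝ) + K + 2) * ((n + (K+1)).choose (K+1) : ℝ) / ((K:ℝ) + 2) := by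
      field_simp; linarith [e1]
    have e2' : ((n + 1 + K).choose K : ℝ)
        = ((K:ℝ) + 1) * ((n + (K+1)).choose (K+1) : ℝ) / ((n:ℝ) + 1) := by
      field_simp; linarith [e2]
    rw [e1', e2', squeezerCoeff, hadef, hbdef, hcdef, hxdef]
    push_cast
    simp only [div_pow]
    field_simp
    ring
  rw [funext hpt] at hcomb
  have hval : a * (1 / (1 - x) ^ (K + 3)) - b * (1 / (1 - x) ^ (K + 2))
      + c * (1 / (1 - x) ^ (K + 1) - 1)
      = 1 - ((K:ℝ) + 1) * (q - 1) / q ^ (K + 2) := by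
    rw [h1mx, hadef, hbdef, hcdef]
    have : (1:ℝ) / q ≠ 0 := by positivity
    simp only [one_div, inv_pow, inv_inv]
    field_simp
    ring
  rw [hval] at hcomb
  rw [hcomb.tsum_eq]
  push_cast
  ring
end

section
/- For q > 1 and integers m₁ > m₂ ≥ 1, and for all n ≥ m₂(q−1) + m₁, the ratio c(q, m₂, n)/c(q, m₂, n + m₁ − m₂) is monotone non-increasing in q on the region where n + 1 − m₂(q−1) > 0; specifically, for q < q', c(q', m₂, n)/c(q', m₂, n+m₁−m₂) ≤ c(q, m₂, n)/c(q, m₂, n+m₁−m₂), where c(q,m,n) = ((n+1−m(q−1))²/((n+1)q^{m+2}))·C(n+m,m)·((q−1)/q)ⁿ. -/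
section OrderedField

variable {α : Type*} [Field α] [LinearOrder α] [IsStrictOrderedRing α]

theorem sub_div_sub_le_sub_div_sub {a b x y : α} (hab : a ≤ b) (hxy : x ≤ y) (hya : y < a) :
    (a - y) / (b - y) ≤ (a - x) / (b - x) := by
  rw [div_le_div_iff₀ (by linarith) (by linarith)]
  nlinarith

theorem div_sub_one_le_div_sub_one {p q : α} (hp : 1 < p) (hpq : p ≤ q) :
    q / (q - 1) ≤ p / (p - 1) := by
  rw [div_le_div_iff₀ (by linarith) (by linarith)]
  linarith

end OrderedField

theorem squeezerCoeff_div_squeezerCoeff_add {q : ℝ} (hq₀ : q ≠ 0) (hq₁ : q ≠ 1)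
    (m n k : ℕ) :
    squeezerCoeff q m n / squeezerCoeff q m (n + k)
      = (((n : ℝ) + 1 - m * (q - 1)) / ((n : ℝ) + k + 1 - m * (q - 1))) ^ 2
        * ((Nat.choose (n + m) m / ((n : ℝ) + 1))
          / (Nat.choose (n + k + m) m / ((n : ℝ) + k + 1)))
        * (q / (q - 1)) ^ k := by
  have hq₁' : q - 1 ≠ 0 := sub_ne_zero.2 hq₁
  unfold squeezerCoeff
  push_cast
  -- if `c(q, m, n + k) = 0`, both sides are `0` because `x / 0 = 0`
  by_cases hb : (n : ℝ) + k + 1 - m * (q - 1) = 0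
  · simp [hb]
  have hc : (Nat.choose (n + k + m) m : ℝ) ≠ 0 :=
    Nat.cast_ne_zero.2 (Nat.choose_pos (by omega)).ne'
  simp only [pow_add, div_pow]
  field_simp

theorem squeezerCoeff_ratio_antitone_general (q q' : ℝ) (hq : 1 < q) (hqq' : q < q')
    (m₁ m₂ : ℕ) (hm : m₂ < m₁) (n : ℕ)
    (hn' : 0 < (n : ℝ) + 1 - m₂ * (q' - 1)) :
    squeezerCoeff q' m₂ n / squeezerCoeff q' m₂ (n + m₁ - m₂)
      ≤ squeezerCoeff q m₂ n / squeezerCoeff q m₂ (n + m₁ - m₂) := by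
  obtain ⟨k, rfl⟩ : ∃ k, m₁ = m₂ + k := ⟨m₁ - m₂, by omega⟩
  have hq' : 1 < q' := hq.trans hqq'
  rw [show n + (m₂ + k) - m₂ = n + k by omega,
    squeezerCoeff_div_squeezerCoeff_add (zero_lt_one.trans hq).ne' hq.ne',
    squeezerCoeff_div_squeezerCoeff_add (zero_lt_one.trans hq').ne' hq'.ne']
  have hx : (m₂ : ℝ) * (q - 1) ≤ m₂ * (q' - 1) := by gcongr
  gcongr ?_ ^ 2 * _ * ?_ ^ k
  · exact div_nonneg hn'.le (by linarith [(k.cast_nonneg : (0 : ℝ) ≤ k)])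
  · exact sub_div_sub_le_sub_div_sub (by simp) hx (sub_pos.1 hn')
  · exact div_sub_one_le_div_sub_one hq hqq'.le

/-- For 1 < q < q', integers m₁ > m₂ ≥ 1, and n ≥ m₂(q−1)+m₁ (on the region where
n + 1 − m₂(q'−1) > 0), the ratio c(q,m₂,n)/c(q,m₂,n+m₁−m₂) is non-increasing in q:
c(q',m₂,n)/c(q',m₂,n+m₁−m₂) ≤ c(q,m₂,n)/c(q,m₂,n+m₁−m₂). -/
theorem squeezerCoeff_ratio_antitone (q q' : ℝ) (hq : 1 < q) (hqq' : q < q')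
    (m₁ m₂ : ℕ) (hm₂ : 1 ≤ m₂) (hm : m₂ < m₁) (n : ℕ)
    (hn : (m₂ : ℝ) * (q - 1) + m₁ ≤ (n : ℝ))
    (hn' : 0 < (n : ℝ) + 1 - m₂ * (q' - 1)) :
    squeezerCoeff q' m₂ n / squeezerCoeff q' m₂ (n + m₁ - m₂)
      ≤ squeezerCoeff q m₂ n / squeezerCoeff q m₂ (n + m₁ - m₂) :=
  squeezerCoeff_ratio_antitone_general q q' hq hqq' m₁ m₂ hm n hn'
end
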